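/- If x, y are positive integers satisfying x² − 2·y² = 1 with y ≠ 0, then y² + 1 is a congruent number: there exist positive rational numbers a, b, c with a² + b² = c² and a·b = 2·(y² + 1). -/

import Mathlib

/-!
Euclid's triangle with legs `p² - q²`, `2pq` has area `pq(p² - q²)`. For `p = x²`, `q = 1` the Pell
equation `x² = 2y² + 1` gives `x⁴ - 1 = (x² - 1)(x² + 1) = 4y²(y² + 1)`, so this area is
`(y² + 1)(2xy)²`; scaling the triangle by `1 / (2xy)` leaves a rational right triangle of area `y² + 1`.
-/

def IsCongruentNumber (n : ℚ) : Prop :=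
  ∃ a b c : ℚ, 0 < a ∧ 0 < b ∧ 0 < c ∧ a ^ 2 + b ^ 2 = c ^ 2 ∧ a * b = 2 * n

theorem isCongruentNumber_euclid {p q : ℚ} (hq : 0 < q) (hqp : q < p) :
    IsCongruentNumber (p * q * (p ^ 2 - q ^ 2)) := by
  have hp : 0 < p := hq.trans hqp
  refine ⟨p ^ 2 - q ^ 2, 2 * p * q, p ^ 2 + q ^ 2, ?_, by positivity, by positivity, by ring, by ring⟩
  nlinarith

theorem IsCongruentNumber.of_mul_sq {n t : ℚ} (h : IsCongruentNumber (n * t ^ 2)) (ht : t ≠ 0) :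
    IsCongruentNumber n := by
  obtain ⟨a, b, c, ha, hb, hc, hpyth, harea⟩ := h
  have ht' : 0 < |t| := abs_pos.mpr ht
  refine ⟨a / |t|, b / |t|, c / |t|, by positivity, by positivity, by positivity, ?_, ?_⟩
  · rw [div_pow, div_pow, div_pow, ← add_div, hpyth]
  · rw [div_mul_div_comm, harea, ← sq, sq_abs]
    field_simp

theorem isCongruentNumber_sq_add_one_of_pell {x y : ℚ} (hpell : x ^ 2 - 2 * y ^ 2 = 1)
    (hy : y ≠ 0) : IsCongruentNumber (y ^ 2 + 1) := by
  have hx2 : 1 < x ^ 2 := by linarith [sq_pos_of_ne_zero hy]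
  have hx : x ≠ 0 := by
    rintro rfl
    norm_num at hx2
  have harea : x ^ 2 * 1 * ((x ^ 2) ^ 2 - 1 ^ 2) = (y ^ 2 + 1) * (2 * x * y) ^ 2 := by
    linear_combination (x ^ 4 + x ^ 2 * (2 * y ^ 2 + 1)) * hpell
  have htriangle := isCongruentNumber_euclid one_pos hx2
  rw [harea] at htriangle
  exact htriangle.of_mul_sq (by positivity)

theorem stmt_19_general (x y : ℤ)
    (hpell : x^2 - 2 * y^2 = 1) (hyne : y ≠ 0) :
    ∃ a b c : ℚ, 0 < a ∧ 0 < b ∧ 0 < c ∧ a^2 + b^2 = c^2 ∧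
      a * b = 2 * ((y:ℚ)^2 + 1) :=
  isCongruentNumber_sq_add_one_of_pell (x := x) (by exact_mod_cast hpell) (by exact_mod_cast hyne)

theorem stmt_19 (x y : ℤ) (hx : 0 < x) (hy : 0 < y)
    (hpell : x^2 - 2 * y^2 = 1) (hyne : y ≠ 0) :
    ∃ a b c : ℚ, 0 < a ∧ 0 < b ∧ 0 < c ∧ a^2 + b^2 = c^2 ∧
      a * b = 2 * ((y:ℚ)^2 + 1) :=
  stmt_19_general x y hpell hyne
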